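/- arXiv:2512.22434 — 2 statements merged into one kernel-verified Lean document; each statement's English description precedes it below -/
import Mathlib

section
/- Let $n\ge 1$, $N=2^n$, and let $\xi_s = \xi_{\min} + s\,\Delta\xi$ for $s=0,\dots,N-1$ (an arithmetic progression). Define the Walsh--Hadamard coefficients $c_j := \frac{1}{N}\sum_{s=0}^{N-1}(-1)^{j\cdot s}\,\xi_s$. Then $c_0 = \xi_{\min} + \Delta\xi\,(2^n-1)/2$; $c_j = -\Delta\xi\,2^{i-1}$ if $j = 2^i$ for some $i\in\{0,\dots,n-1\}$; and $c_j = 0$ whenever the Hamming weight of $j$ is at least 2. -/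
/-!
On the upper half `2^n + s` of `{0, …, 2^(n+1) - 1}` the character `χ_j(s) = (-1)^(j·s)` equals
`ε χ_j(s)` with `ε = (-1)^(bit n of j)`, so `A_n = ∑ χ_j(s)` and `B_n = ∑ χ_j(s) s` obey
`A_{n+1} = (1 + ε) A_n` and `B_{n+1} = (1 + ε) B_n + ε 2^n A_n`. Thus `A_n` is `2^n` or `0` according
as the low `n` bits of `j` vanish or not, `B_n` vanishes once two of them are set, and for `j = 2^i`
only the step past bit `i` creates `B_{i+1} = -4^i`, which then merely doubles.
-/

/-- Bitwise inner product (number of common set bits among the low `n` bits). -/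
def bip (n j s : ℕ) : ℕ :=
  ∑ i ∈ Finset.range n, if j.testBit i ∧ s.testBit i then 1 else 0

/-- Hamming weight of the low `n` bits of `j`. -/
def hw (n j : ℕ) : ℕ :=
  ∑ i ∈ Finset.range n, if j.testBit i then 1 else 0

open Finset

lemma hw_succ (n j : ℕ) : hw (n + 1) j = hw n j + if j.testBit n then 1 else 0 :=
  sum_range_succ _ _

lemma hw_two_pow (n i : ℕ) : hw n (2 ^ i) = if i < n then 1 else 0 := by
  simp [hw, Nat.testBit_two_pow]

lemma bip_succ (n j s : ℕ) :
    bip (n + 1) j s = bip n j s + if j.testBit n ∧ s.testBit n then 1 else 0 :=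
  sum_range_succ _ _

lemma bip_two_pow_add (n j s : ℕ) : bip n j (2 ^ n + s) = bip n j s :=
  sum_congr rfl fun _ hi => by rw [Nat.testBit_two_pow_add_gt (mem_range.mp hi)]

def walsh (n j s : ℕ) : ℝ := (-1) ^ bip n j s

lemma walsh_zero_left (n s : ℕ) : walsh n 0 s = 1 := by
  simp [walsh, bip]

lemma walsh_succ_of_lt {n s : ℕ} (j : ℕ) (hs : s < 2 ^ n) :
    walsh (n + 1) j s = walsh n j s := by
  simp [walsh, bip_succ, Nat.testBit_lt_two_pow hs]

lemma walsh_succ_two_pow_add {n s : ℕ} (j : ℕ) (hs : s < 2 ^ n) :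
    walsh (n + 1) j (2 ^ n + s) = (if j.testBit n then -1 else 1) * walsh n j s := by
  cases hj : j.testBit n <;>
    simp [walsh, bip_succ, bip_two_pow_add, Nat.testBit_two_pow_add_eq,
      Nat.testBit_lt_two_pow hs, hj, pow_succ]

lemma sum_walsh_succ_mul (n j : ℕ) (f : ℕ → ℝ) :
    ∑ s ∈ range (2 ^ (n + 1)), walsh (n + 1) j s * f s =
      ∑ s ∈ range (2 ^ n), walsh n j s * f s +
        (if j.testBit n then -1 else 1) * ∑ s ∈ range (2 ^ n), walsh n j s * f (2 ^ n + s) := by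
  rw [pow_succ, mul_two, sum_range_add, mul_sum]
  congr 1
  · exact sum_congr rfl fun s hs => by rw [walsh_succ_of_lt j (mem_range.mp hs)]
  · exact sum_congr rfl fun s hs => by
      rw [walsh_succ_two_pow_add j (mem_range.mp hs), mul_assoc]

lemma sum_walsh (n j : ℕ) :
    ∑ s ∈ range (2 ^ n), walsh n j s = if hw n j = 0 then 2 ^ n else 0 := by
  induction n with
  | zero => simp [walsh, bip, hw]
  | succ n ih =>
    have h := sum_walsh_succ_mul n j fun _ => 1
    simp only [mul_one] at h
    rw [h, ih, hw_succ]
    cases j.testBit n <;> by_cases h0 : hw n j = 0 <;> simp [h0, pow_succ, mul_two]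

lemma sum_walsh_mul_id_succ (n j : ℕ) :
    ∑ s ∈ range (2 ^ (n + 1)), walsh (n + 1) j s * s =
      ∑ s ∈ range (2 ^ n), walsh n j s * s +
        (if j.testBit n then -1 else 1) *
          (∑ s ∈ range (2 ^ n), walsh n j s * s + 2 ^ n * ∑ s ∈ range (2 ^ n), walsh n j s) := by
  rw [sum_walsh_succ_mul n j (fun s => (s : ℝ))]
  congr 2
  rw [Finset.mul_sum, ← sum_add_distrib]
  exact sum_congr rfl fun s _ => by push_cast; ring

lemma sum_walsh_mul_id_of_two_le_hw {n j : ℕ} (h : 2 ≤ hw n j) :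
    ∑ s ∈ range (2 ^ n), walsh n j s * s = 0 := by
  induction n with
  | zero => simp [hw] at h
  | succ n ih =>
    rw [sum_walsh_mul_id_succ, sum_walsh]
    rw [hw_succ] at h
    cases hj : j.testBit n
    · have h' : 2 ≤ hw n j := by simpa [hj] using h
      simp [ih h', show hw n j ≠ 0 by omega]
    · have h' : hw n j ≠ 0 := by simp [hj] at h; omega
      simp [h']

lemma sum_walsh_two_pow_mul_id {n i : ℕ} (hi : i < n) :
    ∑ s ∈ range (2 ^ n), walsh n (2 ^ i) s * s = -(2 ^ n * 2 ^ i / 2) := by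
  induction n, hi using Nat.le_induction with
  | base =>
    rw [sum_walsh_mul_id_succ, sum_walsh, hw_two_pow, if_neg (lt_irrefl i), if_pos rfl,
      Nat.testBit_two_pow_self, if_pos rfl, Nat.succ_eq_add_one]
    ring
  | succ n hin ih =>
    rw [sum_walsh_mul_id_succ, sum_walsh, hw_two_pow, if_pos (Nat.lt_of_succ_le hin), ih,
      Nat.testBit_two_pow_of_ne (by omega), if_neg Bool.false_ne_true, if_neg one_ne_zero]
    ring

lemma sum_range_cast_id (N : ℕ) : ∑ s ∈ range N, (s : ℝ) = N * (N - 1) / 2 := by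
  induction N with
  | zero => simp
  | succ N ih =>
    rw [sum_range_succ, ih]
    push_cast
    ring

lemma sum_walsh_mul_affine (n j : ℕ) (a d : ℝ) :
    ∑ s ∈ range (2 ^ n), walsh n j s * (a + s * d) =
      a * ∑ s ∈ range (2 ^ n), walsh n j s + d * ∑ s ∈ range (2 ^ n), walsh n j s * s := by
  rw [mul_sum, mul_sum, ← sum_add_distrib]
  exact sum_congr rfl fun s _ => by ring

theorem walsh_coeff_arithmetic_general (n : ℕ) (ξmin Δξ : ℝ) (c : ℕ → ℝ)
    (hc : ∀ j, c j = (1 / (2 ^ n : ℝ)) *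
        ∑ s ∈ Finset.range (2 ^ n), (-1 : ℝ) ^ bip n j s * (ξmin + s * Δξ)) :
    c 0 = ξmin + Δξ * ((2 ^ n : ℝ) - 1) / 2 ∧
    (∀ i < n, c (2 ^ i) = -(Δξ * (2 : ℝ) ^ i / 2)) ∧
    (∀ j < 2 ^ n, 2 ≤ hw n j → c j = 0) := by
  have hc' : ∀ j, c j = (ξmin * ∑ s ∈ range (2 ^ n), walsh n j s +
      Δξ * ∑ s ∈ range (2 ^ n), walsh n j s * s) / 2 ^ n := fun j => by
    rw [hc, ← sum_walsh_mul_affine, one_div_mul_eq_div]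
    rfl
  refine ⟨?_, fun i hi => ?_, fun j _ hj => ?_⟩
  · simp only [hc', walsh_zero_left, one_mul, sum_const, card_range, nsmul_one, sum_range_cast_id]
    push_cast
    field_simp
  · rw [hc', sum_walsh, hw_two_pow, if_pos hi, sum_walsh_two_pow_mul_id hi]
    field_simp
    simp
  · rw [hc', sum_walsh, sum_walsh_mul_id_of_two_le_hw hj, if_neg (by omega)]
    simp

/-- Walsh–Hadamard coefficients of an arithmetic progression `ξ_s = ξ_min + s Δξ`:
`c_0 = ξ_min + Δξ (2^n - 1)/2`, `c_{2^i} = -Δξ 2^i / 2`, and `c_j = 0` when `w(j) ≥ 2`. -/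
theorem walsh_coeff_arithmetic (n : ℕ) (hn : 1 ≤ n) (ξmin Δξ : ℝ) (c : ℕ → ℝ)
    (hc : ∀ j, c j = (1 / (2 ^ n : ℝ)) *
        ∑ s ∈ Finset.range (2 ^ n), (-1 : ℝ) ^ bip n j s * (ξmin + s * Δξ)) :
    c 0 = ξmin + Δξ * ((2 ^ n : ℝ) - 1) / 2 ∧
    (∀ i < n, c (2 ^ i) = -(Δξ * (2 : ℝ) ^ i / 2)) ∧
    (∀ j < 2 ^ n, 2 ≤ hw n j → c j = 0) :=
  walsh_coeff_arithmetic_general n ξmin Δξ c hc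
end

section
/- Let $n\ge 1$, $N=2^n$, and $\xi_s = \xi_{\min}+s\,\Delta\xi$ with $\Delta\xi\neq 0$. The number of indices $j\in\{0,\dots,N-1\}$ with nonzero Walsh--Hadamard coefficient $c_j = \frac{1}{N}\sum_s(-1)^{j\cdot s}\xi_s$, assuming additionally $\xi_{\min} + \Delta\xi(2^n-1)/2 \neq 0$, is exactly $n+1$. -/
open scoped Classical

noncomputable def Swh (n j : ℕ) : ℝ := ∑ s ∈ Finset.range (2 ^ n), (-1 : ℝ) ^ bip n j s
noncomputable def Twh (n j : ℕ) : ℝ :=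
  ∑ s ∈ Finset.range (2 ^ n), (-1 : ℝ) ^ bip n j s * s

lemma bip_succ_lt (n j s : ℕ) (hs : s < 2 ^ n) : bip (n + 1) j s = bip n j s := by
  rw [bip, Finset.sum_range_succ, Nat.testBit_lt_two_pow hs]
  simp [bip]

lemma bip_succ_add (n j t : ℕ) (ht : t < 2 ^ n) :
    bip (n + 1) j (2 ^ n + t) = bip n j t + (if j.testBit n then 1 else 0) := by
  rw [bip, Finset.sum_range_succ, Nat.testBit_two_pow_add_eq, Nat.testBit_lt_two_pow ht]
  congr 1
  · refine Finset.sum_congr rfl fun i hi => ?_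
    rw [Nat.testBit_two_pow_add_gt (Finset.mem_range.mp hi)]
  · simp

lemma sum_split (n : ℕ) (f : ℕ → ℝ) : ∑ s ∈ Finset.range (2 ^ (n + 1)), f s =
    (∑ s ∈ Finset.range (2 ^ n), f s) + ∑ t ∈ Finset.range (2 ^ n), f (2 ^ n + t) := by
  rw [pow_succ, mul_two, Finset.sum_range_add]

lemma S_rec (n j : ℕ) :
    Swh (n + 1) j = Swh n j + (-1 : ℝ) ^ (if j.testBit n then 1 else 0) * Swh n j := by
  rw [Swh, sum_split]
  congr 1
  · exact Finset.sum_congr rfl fun s hs => by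
      rw [bip_succ_lt n j s (Finset.mem_range.mp hs)]
  · rw [Swh, Finset.mul_sum]
    refine Finset.sum_congr rfl fun t ht => ?_
    rw [bip_succ_add n j t (Finset.mem_range.mp ht), pow_add]
    ring

lemma T_rec (n j : ℕ) :
    Twh (n + 1) j = Twh n j + (-1 : ℝ) ^ (if j.testBit n then 1 else 0) *
      (Twh n j + 2 ^ n * Swh n j) := by
  rw [Twh, sum_split]
  congr 1
  · exact Finset.sum_congr rfl fun s hs => by
      rw [bip_succ_lt n j s (Finset.mem_range.mp hs)]
  · rw [Twh, Swh, mul_add, Finset.mul_sum, Finset.mul_sum, Finset.mul_sum,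
      ← Finset.sum_add_distrib]
    refine Finset.sum_congr rfl fun t ht => ?_
    rw [bip_succ_add n j t (Finset.mem_range.mp ht), pow_add]
    push_cast
    ring

lemma bip_lowbits (n t : ℕ) (ht : t < 2 ^ n) (s : ℕ) :
    bip n (2 ^ n + t) s = bip n t s := by
  refine Finset.sum_congr rfl fun i hi => ?_
  rw [Nat.testBit_two_pow_add_gt (Finset.mem_range.mp hi)]

lemma ST_val (n : ℕ) : ∀ j < 2 ^ n,
    Swh n j = (if j = 0 then (2 ^ n : ℝ) else 0) ∧
    Twh n j = (if j = 0 then (2 ^ n : ℝ) * (2 ^ n - 1) / 2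
      else if ∃ i, j = 2 ^ i then -(j : ℝ) * 2 ^ n / 2 else 0) := by
  induction n with
  | zero =>
    intro j hj
    interval_cases j
    simp [Swh, Twh, bip]
  | succ n ih =>
    intro j hj
    by_cases hlt : j < 2 ^ n
    · -- bit n of j is false
      have hbit : j.testBit n = false := Nat.testBit_lt_two_pow hlt
      have hE : ((-1 : ℝ) ^ (if j.testBit n then 1 else 0)) = 1 := by
        rw [hbit]; norm_num
      obtain ⟨hSn, hTn⟩ := ih j hlt
      rw [S_rec, T_rec, hE, hSn, hTn, one_mul]
      by_cases hj0 : j = 0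
      · subst hj0
        refine ⟨?_, ?_⟩ <;> split_ifs <;> push_cast <;> ring
      · refine ⟨by simp [hj0], ?_⟩
        by_cases hp : ∃ i, j = 2 ^ i
        · simp only [if_neg hj0, if_pos hp]; ring
        · simp only [if_neg hj0, if_neg hp]; ring
    · -- j = 2^n + t
      have h2n : 2 ^ n ≤ j := le_of_not_gt hlt
      obtain ⟨t, rfl⟩ : ∃ t, j = 2 ^ n + t := ⟨j - 2 ^ n, by omega⟩
      have ht : t < 2 ^ n := by
        rw [pow_succ, mul_two] at hj
        omega
      have hbit : (2 ^ n + t).testBit n = true := by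
        rw [Nat.testBit_two_pow_add_eq, Nat.testBit_lt_two_pow ht]
        rfl
      have hE : ((-1 : ℝ) ^ (if (2 ^ n + t).testBit n then 1 else 0)) = -1 := by
        rw [hbit]; norm_num
      have hSe : Swh n (2 ^ n + t) = Swh n t :=
        Finset.sum_congr rfl fun s _ => by rw [bip_lowbits n t ht]
      have hTe : Twh n (2 ^ n + t) = Twh n t :=
        Finset.sum_congr rfl fun s _ => by rw [bip_lowbits n t ht]
      obtain ⟨hSn, hTn⟩ := ih t ht
      rw [S_rec, T_rec, hE, hSe, hTe, hSn, hTn]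
      have hne0 : 2 ^ n + t ≠ 0 := by positivity
      refine ⟨by split_ifs <;> ring, ?_⟩
      simp only [if_neg hne0]
      by_cases ht0 : t = 0
      · subst ht0
        have hp : ∃ i, 2 ^ n + 0 = 2 ^ i := ⟨n, by ring⟩
        simp only [if_pos rfl, if_pos hp]
        push_cast
        ring
      · have hp : ¬ ∃ i, 2 ^ n + t = 2 ^ i := by
          rintro ⟨i, hi⟩
          rcases lt_trichotomy i n with h | h | h
          · have h1 : 2 ^ i < 2 ^ n := Nat.pow_lt_pow_right one_lt_two h
            have h2 : 2 ^ n ≤ 2 ^ n + t := Nat.le_add_right _ _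
            omega
          · subst h
            omega
          · have h1 : 2 ^ (n + 1) ≤ 2 ^ i := Nat.pow_le_pow_right (by norm_num) h
            rw [pow_succ, mul_two] at h1
            omega
        by_cases hpt : ∃ i, t = 2 ^ i
        · simp only [if_neg ht0, if_pos hpt, if_neg hp]; ring
        · simp only [if_neg ht0, if_neg hpt, if_neg hp]; ring

/-- For an arithmetic progression of realizations with `Δξ ≠ 0` and nonzero mean
`ξ_min + Δξ (2^n - 1)/2`, exactly `n + 1` of the `2^n` Walsh–Hadamard coefficients
are nonzero. -/
theorem walsh_coeff_arithmetic_sparsity (n : ℕ) (hn : 1 ≤ n) (ξmin Δξ : ℝ)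
    (hΔ : Δξ ≠ 0) (h0 : ξmin + Δξ * ((2 ^ n : ℝ) - 1) / 2 ≠ 0) (c : ℕ → ℝ)
    (hc : ∀ j, c j = (1 / (2 ^ n : ℝ)) *
        ∑ s ∈ Finset.range (2 ^ n), (-1 : ℝ) ^ bip n j s * (ξmin + s * Δξ)) :
    ((Finset.range (2 ^ n)).filter (fun j => c j ≠ 0)).card = n + 1 := by
  have hNpos : (0 : ℝ) < 2 ^ n := by positivity
  have hc' : ∀ j, c j = (1 / (2 ^ n : ℝ)) * (ξmin * Swh n j + Δξ * Twh n j) := by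
    intro j
    rw [hc j]
    congr 1
    rw [Swh, Twh, Finset.mul_sum, Finset.mul_sum, ← Finset.sum_add_distrib]
    exact Finset.sum_congr rfl fun s _ => by ring
  have hval : ∀ j < 2 ^ n, c j ≠ 0 ↔ (j = 0 ∨ ∃ i, i < n ∧ j = 2 ^ i) := by
    intro j hj
    obtain ⟨hS, hT⟩ := ST_val n j hj
    by_cases hj0 : j = 0
    · subst hj0
      have hS0 : Swh n 0 = 2 ^ n := by rw [hS, if_pos rfl]
      have hT0 : Twh n 0 = 2 ^ n * (2 ^ n - 1) / 2 := by rw [hT, if_pos rfl]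
      have hcv : c 0 = ξmin + Δξ * ((2 ^ n : ℝ) - 1) / 2 := by
        rw [hc', hS0, hT0]
        field_simp
      rw [hcv]
      exact ⟨fun _ => Or.inl rfl, fun _ => h0⟩
    · by_cases hp : ∃ i, j = 2 ^ i
      · obtain ⟨i, rfl⟩ := hp
        have hin : i < n := (Nat.pow_lt_pow_iff_right one_lt_two).mp hj
        have hS0 : Swh n (2 ^ i) = 0 := by rw [hS, if_neg hj0]
        have hT0 : Twh n (2 ^ i) = -((2 : ℝ) ^ i) * 2 ^ n / 2 := by
          rw [hT, if_neg hj0, if_pos ⟨i, rfl⟩]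
          push_cast
          ring
        have hcv : c (2 ^ i) = -(Δξ * 2 ^ i) / 2 := by
          rw [hc', hS0, hT0]
          field_simp
          ring
        rw [hcv]
        constructor
        · intro _; exact Or.inr ⟨i, hin, rfl⟩
        · intro _
          exact div_ne_zero (neg_ne_zero.mpr (mul_ne_zero hΔ (by positivity))) two_ne_zero
      · have hcv : c j = 0 := by
          rw [hc', hS, hT, if_neg hj0, if_neg hj0, if_neg hp]
          ring
        rw [hcv]
        constructor
        · intro h; exact absurd rfl h
        · rintro (h | ⟨i, _, h⟩)
          · exact absurd h hj0
          · exact absurd ⟨i, h⟩ hp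
  have hset : (Finset.range (2 ^ n)).filter (fun j => c j ≠ 0) =
      insert 0 ((Finset.range n).image (fun i => 2 ^ i)) := by
    ext j
    simp only [Finset.mem_filter, Finset.mem_range, Finset.mem_insert, Finset.mem_image]
    constructor
    · rintro ⟨hj, hcj⟩
      rcases (hval j hj).mp hcj with h | ⟨i, hin, h⟩
      · left; exact h
      · right; exact ⟨i, hin, h.symm⟩
    · rintro (rfl | ⟨i, hi, rfl⟩)
      · have hj : 0 < 2 ^ n := Nat.two_pow_pos n
        exact ⟨hj, (hval 0 hj).mpr (Or.inl rfl)⟩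
      · have hj : 2 ^ i < 2 ^ n := Nat.pow_lt_pow_right one_lt_two hi
        exact ⟨hj, (hval _ hj).mpr (Or.inr ⟨i, hi, rfl⟩)⟩
  rw [hset, Finset.card_insert_of_notMem, Finset.card_image_of_injective _
    (fun a b h => Nat.pow_right_injective (by norm_num) h), Finset.card_range]
  simp only [Finset.mem_image, Finset.mem_range]
  rintro ⟨i, _, h⟩
  exact absurd h (Nat.two_pow_pos i).ne'
end
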